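/- Let H₁, H₂ be real Hilbert spaces, A: H₁ → H₂ bounded linear, and Q ⊆ H₂ nonempty closed convex. The mapping x ↦ x − λA*(I − P_Q)Ax is nonexpansive on H₁ whenever 0 < λ ≤ 1/‖A‖² (indeed it is averaged for 0 < λ < 2/‖A‖²). -/

import Mathlib

/-!
The minimizing property of `P_Q` on the convex set `Q` yields the variational inequality
`⟪u - P u, y - P u⟫ ≤ 0` for `y ∈ Q`; adding two instances of it shows that `T = I - P_Q` is
firmly nonexpansive, `‖T u - T v‖² ≤ ⟪T u - T v, u - v⟫`. Moving `A` across the inner product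
and bounding `‖A*‖ = ‖A‖` makes `G = A* T A` cocoercive, `‖G x - G y‖² ≤ ‖A‖² ⟪G x - G y, x - y⟫`.
Expanding `‖(x - y) - λ (G x - G y)‖²` then shows that `I - λ G` is nonexpansive as soon as
`λ ‖A‖² ≤ 2`.
-/

open scoped RealInnerProductSpace

section Projection

variable {F : Type*} [NormedAddCommGroup F] [InnerProductSpace ℝ F]

theorem real_inner_sub_le_zero_of_forall_norm_sub_le {K : Set F} (hK : Convex ℝ K) {u p : F}
    (hp : p ∈ K) (hmin : ∀ y ∈ K, ‖u - p‖ ≤ ‖u - y‖) :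
    ∀ y ∈ K, ⟪u - p, y - p⟫ ≤ 0 := by
  have : Nonempty K := ⟨⟨p, hp⟩⟩
  refine (norm_eq_iInf_iff_real_inner_le_zero hK hp).1 (le_antisymm ?_ ?_)
  · exact le_ciInf fun w => hmin w w.2
  · exact ciInf_le ⟨0, by rintro _ ⟨w, rfl⟩; exact norm_nonneg (u - w)⟩ (⟨p, hp⟩ : K)

theorem norm_sub_sub_sq_le_inner_of_forall_inner_le_zero {K : Set F} {P : F → F}
    (hPK : ∀ u, P u ∈ K) (hvi : ∀ u, ∀ y ∈ K, ⟪u - P u, y - P u⟫ ≤ 0) (u v : F) :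
    ‖(u - P u) - (v - P v)‖ ^ 2 ≤ ⟪(u - P u) - (v - P v), u - v⟫ := by
  have hu := hvi u (P v) (hPK v)
  have hv := hvi v (P u) (hPK u)
  have hsplit : u - v = ((u - P u) - (v - P v)) + (P u - P v) := by abel
  have hflip : P v - P u = -(P u - P v) := (neg_sub _ _).symm
  rw [hflip, inner_neg_right] at hu
  rw [hsplit, inner_add_right, real_inner_self_eq_norm_sq, inner_sub_left]
  linarith

end Projection

section GradientStep

variable {E F : Type*} [NormedAddCommGroup E] [InnerProductSpace ℝ E] [CompleteSpace E]
  [NormedAddCommGroup F] [InnerProductSpace ℝ F] [CompleteSpace F]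

theorem norm_adjoint_comp_sub_sq_le (A : E →L[ℝ] F) {T : F → F}
    (hT : ∀ u v, ‖T u - T v‖ ^ 2 ≤ ⟪T u - T v, u - v⟫) (x y : E) :
    ‖A.adjoint (T (A x)) - A.adjoint (T (A y))‖ ^ 2
      ≤ ‖A‖ ^ 2 * ⟪A.adjoint (T (A x)) - A.adjoint (T (A y)), x - y⟫ := by
  have hinner : ⟪A.adjoint (T (A x)) - A.adjoint (T (A y)), x - y⟫
      = ⟪T (A x) - T (A y), A x - A y⟫ := by
    rw [← map_sub, ContinuousLinearMap.adjoint_inner_left, map_sub]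
  have hnorm : ‖A.adjoint (T (A x)) - A.adjoint (T (A y))‖ ≤ ‖A‖ * ‖T (A x) - T (A y)‖ := by
    rw [← map_sub, ← ContinuousLinearMap.adjoint.norm_map A]
    exact A.adjoint.le_opNorm _
  rw [hinner]
  calc _ ≤ (‖A‖ * ‖T (A x) - T (A y)‖) ^ 2 := by gcongr
    _ = ‖A‖ ^ 2 * ‖T (A x) - T (A y)‖ ^ 2 := mul_pow _ _ _
    _ ≤ _ := by gcongr; exact hT _ _

end GradientStep

theorem norm_sub_smul_sub_le_of_cocoercive {E : Type*} [NormedAddCommGroup E]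
    [InnerProductSpace ℝ E] {G : E → E} {L lam : ℝ} (hL : 0 ≤ L)
    (hG : ∀ x y, ‖G x - G y‖ ^ 2 ≤ L * ⟪G x - G y, x - y⟫) (hlam : 0 ≤ lam)
    (hlamL : lam * L ≤ 2) (x y : E) :
    ‖(x - lam • G x) - (y - lam • G y)‖ ≤ ‖x - y‖ := by
  set g := G x - G y
  have hg := hG x y
  have hmono : 0 ≤ ⟪g, x - y⟫ := by
    rcases hL.eq_or_lt with rfl | hLpos
    · have : g = 0 := by simpa using hg
      simp [this]
    · exact nonneg_of_mul_nonneg_right ((sq_nonneg _).trans hg) hLpos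
  have hstep : (x - lam • G x) - (y - lam • G y) = (x - y) - lam • g := by
    simp only [g, smul_sub]; abel
  rw [hstep]
  refine pow_le_pow_iff_left₀ (norm_nonneg _) (norm_nonneg _) two_ne_zero |>.1 ?_
  rw [norm_sub_sq_real, real_inner_smul_right, norm_smul, mul_pow, Real.norm_eq_abs, sq_abs,
    real_inner_comm]
  -- `λ² ‖g‖² ≤ λ² L ⟪g, x - y⟫ ≤ 2 λ ⟪g, x - y⟫`
  nlinarith [mul_le_mul_of_nonneg_left hg (sq_nonneg lam),
    mul_le_mul_of_nonneg_right hlamL (mul_nonneg hlam hmono)]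

theorem stmt_12_general {H₁ H₂ : Type*}
    [NormedAddCommGroup H₁] [InnerProductSpace ℝ H₁] [CompleteSpace H₁]
    [NormedAddCommGroup H₂] [InnerProductSpace ℝ H₂] [CompleteSpace H₂]
    (Q : Set H₂) (hQv : Convex ℝ Q)
    (A : H₁ →L[ℝ] H₂)
    (PQ : H₂ → H₂) (hPQ : ∀ x, PQ x ∈ Q ∧ ∀ y ∈ Q, ‖x - PQ x‖ ≤ ‖x - y‖)
    (lam : ℝ) (hlam : 0 < lam) (hlam' : lam * ‖A‖ ^ 2 ≤ 1) :
    ∀ x y : H₁,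
      ‖(x - lam • (ContinuousLinearMap.adjoint A) (A x - PQ (A x)))
        - (y - lam • (ContinuousLinearMap.adjoint A) (A y - PQ (A y)))‖ ≤ ‖x - y‖ := by
  have hvi : ∀ u, ∀ y ∈ Q, ⟪u - PQ u, y - PQ u⟫ ≤ 0 := fun u =>
    real_inner_sub_le_zero_of_forall_norm_sub_le hQv (hPQ u).1 (hPQ u).2
  have hfirm := norm_sub_sub_sq_le_inner_of_forall_inner_le_zero (fun u => (hPQ u).1) hvi
  exact norm_sub_smul_sub_le_of_cocoercive (sq_nonneg ‖A‖)
    (norm_adjoint_comp_sub_sq_le A (T := fun u => u - PQ u) hfirm) hlam.le (by linarith)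

/-- The gradient step `x ↦ x - λ A*(I - P_Q)Ax` of the split feasibility problem is
nonexpansive whenever `0 < λ ≤ 1/‖A‖²` (i.e. `λ‖A‖² ≤ 1`). -/
theorem stmt_12 {H₁ H₂ : Type*}
    [NormedAddCommGroup H₁] [InnerProductSpace ℝ H₁] [CompleteSpace H₁]
    [NormedAddCommGroup H₂] [InnerProductSpace ℝ H₂] [CompleteSpace H₂]
    (Q : Set H₂) (hQ : Q.Nonempty) (hQc : IsClosed Q) (hQv : Convex ℝ Q)
    (A : H₁ →L[ℝ] H₂)
    (PQ : H₂ → H₂) (hPQ : ∀ x, PQ x ∈ Q ∧ ∀ y ∈ Q, ‖x - PQ x‖ ≤ ‖x - y‖)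
    (lam : ℝ) (hlam : 0 < lam) (hlam' : lam * ‖A‖ ^ 2 ≤ 1) :
    ∀ x y : H₁,
      ‖(x - lam • (ContinuousLinearMap.adjoint A) (A x - PQ (A x)))
        - (y - lam • (ContinuousLinearMap.adjoint A) (A y - PQ (A y)))‖ ≤ ‖x - y‖ :=
  stmt_12_general Q hQv A PQ hPQ lam hlam hlam'
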